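/- Let ν > 0, 0 < a ≤ b (playing the role of νλ₁ ≤ νλ_N), ε ∈ [0,1), and define R(r) = max_{z ∈ [a,b]} z^ε e^{−r z} for r ≥ 0. Then for every t ≥ 0, the integral ∫₀^t R(r) dr is bounded by a constant depending only on ε and a (and not on b or t); explicitly ∫₀^t R(r) dr ≤ (1 − e^{−ε})/b^{1−ε} + (ε e^{−ε}/(1−ε))(a^{ε−1} − b^{ε−1}) + e^{−ε}/a^{1−ε}. -/

import Mathlib

/-!
Since `z ↦ ε log z - r z` is concave, comparing it with its tangent line bounds the envelope
`R r` by `b ^ ε e^{-rb}` for `r ≤ ε / b`, by the interior peak value `ε ^ ε e^{-ε} r^{-ε}` for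
`ε / b ≤ r ≤ ε / a`, and by `a ^ ε e^{-ra}` for `r ≥ ε / a`. Integrating these three majorants
over the three ranges gives the three terms of the bound; as `R ≥ 0`, it suffices to integrate
up to `max t (ε / a)`.
-/

open Real Set intervalIntegral MeasureTheory

/-- Concavity of `z ↦ ε log z - r z`: it lies below its tangent at `c`, whose slope is
`ε / c - r`. -/
lemma rpow_mul_exp_le_of_tangent {ε c z r : ℝ} (hε : 0 ≤ ε) (hc : 0 < c) (hz : 0 < z)
    (hslope : (ε / c - r) * (z - c) ≤ 0) :
    z ^ ε * exp (-r * z) ≤ c ^ ε * exp (-r * c) := by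
  rw [rpow_def_of_pos hz, rpow_def_of_pos hc, ← exp_add, ← exp_add, exp_le_exp]
  have hlog : log z - log c ≤ z / c - 1 := by
    rw [← log_div hz.ne' hc.ne']
    exact log_le_sub_one_of_pos (div_pos hz hc)
  have htangent : (ε / c - r) * (z - c) = ε * (z / c - 1) - r * z + r * c := by
    field_simp; ring
  nlinarith [mul_le_mul_of_nonneg_left hlog hε]

lemma integral_exp_neg_mul {c : ℝ} (hc : 0 < c) (s u : ℝ) :
    ∫ r in s..u, exp (-r * c) = (exp (-s * c) - exp (-u * c)) / c := by
  have hderiv : ∀ r ∈ uIcc s u, HasDerivAt (fun r => exp (-r * c) / -c) (exp (-r * c)) r := by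
    intro r _
    refine (((hasDerivAt_neg r).mul_const c).exp.div_const (-c)).congr_deriv ?_
    field_simp
  rw [integral_eq_sub_of_hasDerivAt hderiv ((by fun_prop : Continuous _).intervalIntegrable _ _)]
  ring

lemma rpow_mul_div_self {c : ℝ} (hc : 0 < c) (ε x : ℝ) : c ^ ε * (x / c) = x / c ^ (1 - ε) := by
  rw [rpow_sub hc, rpow_one]
  field_simp

section Envelope

variable {a b ε : ℝ} {R : ℝ → ℝ}

lemma bddAbove_image_rpow_mul_exp (hε0 : 0 ≤ ε) (r : ℝ) :
    BddAbove ((fun z : ℝ => z ^ ε * exp (-r * z)) '' Icc a b) :=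
  isCompact_Icc.bddAbove_image
    ((continuous_id.rpow_const fun _ => Or.inr hε0).mul (by fun_prop)).continuousOn

variable (hR : ∀ r : ℝ, 0 ≤ r → R r = sSup ((fun z : ℝ => z ^ ε * exp (-r * z)) '' Icc a b))
include hR

lemma le_envelope (hε0 : 0 ≤ ε) {r z : ℝ} (hr : 0 ≤ r) (hz : z ∈ Icc a b) :
    z ^ ε * exp (-r * z) ≤ R r := by
  rw [hR r hr]
  exact le_csSup (bddAbove_image_rpow_mul_exp hε0 r) (mem_image_of_mem _ hz)

lemma envelope_le (hab : a ≤ b) {r c : ℝ} (hr : 0 ≤ r)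
    (hc : ∀ z ∈ Icc a b, z ^ ε * exp (-r * z) ≤ c) : R r ≤ c := by
  rw [hR r hr]
  exact csSup_le ((nonempty_Icc.2 hab).image _) (forall_mem_image.2 hc)

lemma envelope_nonneg (ha : 0 < a) (hab : a ≤ b) (hε0 : 0 ≤ ε) {r : ℝ} (hr : 0 ≤ r) :
    0 ≤ R r :=
  (by positivity : 0 ≤ a ^ ε * exp (-r * a)).trans
    (le_envelope hR hε0 hr (left_mem_Icc.2 hab))

lemma antitoneOn_envelope (ha : 0 < a) (hab : a ≤ b) (hε0 : 0 ≤ ε) : AntitoneOn R (Ici 0) := by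
  intro r₁ hr₁ r₂ hr₂ hr
  refine envelope_le hR hab hr₂ fun z hz => (le_trans ?_ (le_envelope hR hε0 hr₁ hz))
  have hz : 0 < z := ha.trans_le hz.1
  gcongr

lemma intervalIntegrable_envelope (ha : 0 < a) (hab : a ≤ b) (hε0 : 0 ≤ ε) {s u : ℝ}
    (hs : 0 ≤ s) (hu : 0 ≤ u) : IntervalIntegrable R volume s u :=
  ((antitoneOn_envelope hR ha hab hε0).mono fun _ hx =>
    (le_min hs hu).trans hx.1).intervalIntegrable

lemma envelope_le_right (ha : 0 < a) (hab : a ≤ b) (hε0 : 0 ≤ ε) {r : ℝ} (hr : 0 ≤ r)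
    (hrb : r ≤ ε / b) : R r ≤ b ^ ε * exp (-r * b) := by
  have hb : 0 < b := ha.trans_le hab
  refine envelope_le hR hab hr fun z hz =>
    rpow_mul_exp_le_of_tangent hε0 hb (ha.trans_le hz.1) ?_
  exact mul_nonpos_of_nonneg_of_nonpos (by linarith) (by linarith [hz.2])

lemma envelope_le_left (ha : 0 < a) (hab : a ≤ b) (hε0 : 0 ≤ ε) {r : ℝ} (hra : ε / a ≤ r) :
    R r ≤ a ^ ε * exp (-r * a) := by
  refine envelope_le hR hab ((div_nonneg hε0 ha.le).trans hra) fun z hz =>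
    rpow_mul_exp_le_of_tangent hε0 ha (ha.trans_le hz.1) ?_
  exact mul_nonpos_of_nonpos_of_nonneg (by linarith) (by linarith [hz.1])

/-- The unconstrained maximum of `z ↦ z ^ ε * exp (-r * z)` over `z > 0`, attained at `ε / r`. -/
lemma envelope_le_peak (ha : 0 < a) (hab : a ≤ b) (hε : 0 < ε) {r : ℝ} (hr : 0 < r) :
    R r ≤ ε ^ ε * exp (-ε) * r ^ (-ε) := by
  have hpeak : (ε / r) ^ ε * exp (-r * (ε / r)) = ε ^ ε * exp (-ε) * r ^ (-ε) := by
    rw [div_rpow hε.le hr.le, rpow_neg hr.le, show -r * (ε / r) = -ε by field_simp]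
    ring
  refine hpeak ▸ envelope_le hR hab hr.le fun z hz =>
    rpow_mul_exp_le_of_tangent hε.le (div_pos hε hr) (ha.trans_le hz.1) ?_
  rw [div_div_cancel₀ hε.ne', sub_self, zero_mul]

lemma integral_envelope_le_right (ha : 0 < a) (hab : a ≤ b) (hε0 : 0 ≤ ε) :
    ∫ r in (0 : ℝ)..ε / b, R r ≤ (1 - exp (-ε)) / b ^ (1 - ε) := by
  have hb : 0 < b := ha.trans_le hab
  have hεb : 0 ≤ ε / b := div_nonneg hε0 hb.le
  calc ∫ r in (0 : ℝ)..ε / b, R r ≤ ∫ r in (0 : ℝ)..ε / b, b ^ ε * exp (-r * b) :=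
        integral_mono_on hεb (intervalIntegrable_envelope hR ha hab hε0 le_rfl hεb)
          ((by fun_prop : Continuous _).intervalIntegrable _ _)
          fun r hr => envelope_le_right hR ha hab hε0 hr.1 hr.2
    _ = b ^ ε * ((1 - exp (-ε)) / b) := by
        rw [intervalIntegral.integral_const_mul, integral_exp_neg_mul hb, neg_mul, neg_mul, div_mul_cancel₀ ε hb.ne']
        simp
    _ = (1 - exp (-ε)) / b ^ (1 - ε) := rpow_mul_div_self hb ε _

lemma integral_envelope_le_middle (ha : 0 < a) (hab : a ≤ b) (hε0 : 0 ≤ ε) (hε1 : ε < 1) :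
    ∫ r in ε / b..ε / a, R r ≤ (ε * exp (-ε) / (1 - ε)) * (a ^ (ε - 1) - b ^ (ε - 1)) := by
  rcases hε0.eq_or_lt with rfl | hε
  · simp
  have hb : 0 < b := ha.trans_le hab
  have hpow : ∀ x : ℝ, 0 < x → (ε / x) ^ (1 - ε) = ε ^ (1 - ε) * x ^ (ε - 1) := by
    intro x hx
    rw [div_rpow hε0 hx.le, div_eq_mul_inv, ← rpow_neg hx.le, neg_sub]
  have hε_mul : ε ^ ε * ε ^ (1 - ε) = ε := by
    rw [← rpow_add hε, add_sub_cancel, rpow_one]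
  calc ∫ r in ε / b..ε / a, R r ≤ ∫ r in ε / b..ε / a, ε ^ ε * exp (-ε) * r ^ (-ε) :=
        integral_mono_on (div_le_div_of_nonneg_left hε0 ha hab)
          (intervalIntegrable_envelope hR ha hab hε0 (div_nonneg hε0 hb.le)
            (div_nonneg hε0 ha.le))
          ((intervalIntegrable_rpow' (by linarith)).const_mul _)
          fun r hr => envelope_le_peak hR ha hab hε ((div_pos hε hb).trans_le hr.1)
    _ = ε ^ ε * exp (-ε) * (((ε / a) ^ (1 - ε) - (ε / b) ^ (1 - ε)) / (1 - ε)) := by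
        rw [intervalIntegral.integral_const_mul, integral_rpow (Or.inl (by linarith)),
          neg_add_eq_sub]
    _ = (ε * exp (-ε) / (1 - ε)) * (a ^ (ε - 1) - b ^ (ε - 1)) := by
        rw [hpow a ha, hpow b hb]
        linear_combination (exp (-ε) / (1 - ε) * (a ^ (ε - 1) - b ^ (ε - 1))) * hε_mul

lemma integral_envelope_le_left (ha : 0 < a) (hab : a ≤ b) (hε0 : 0 ≤ ε) {T : ℝ}
    (hT : ε / a ≤ T) : ∫ r in ε / a..T, R r ≤ exp (-ε) / a ^ (1 - ε) := by
  have hεa : 0 ≤ ε / a := div_nonneg hε0 ha.le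
  calc ∫ r in ε / a..T, R r ≤ ∫ r in ε / a..T, a ^ ε * exp (-r * a) :=
        integral_mono_on hT (intervalIntegrable_envelope hR ha hab hε0 hεa (hεa.trans hT))
          ((by fun_prop : Continuous _).intervalIntegrable _ _)
          fun r hr => envelope_le_left hR ha hab hε0 hr.1
    _ = a ^ ε * ((exp (-ε) - exp (-T * a)) / a) := by
        rw [intervalIntegral.integral_const_mul, integral_exp_neg_mul ha, neg_mul, div_mul_cancel₀ ε ha.ne']
    _ ≤ a ^ ε * (exp (-ε) / a) := by
        gcongr
        linarith [exp_pos (-T * a)]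
    _ = exp (-ε) / a ^ (1 - ε) := rpow_mul_div_self ha ε _

end Envelope

/-- For `0 < a ≤ b`, `ε ∈ [0,1)`, with `R(r) = max_{z∈[a,b]} z^ε e^{−rz}`, the
integral `∫₀^t R` is bounded by
`(1−e^{−ε})/b^{1−ε} + (ε e^{−ε}/(1−ε))(a^{ε−1} − b^{ε−1}) + e^{−ε}/a^{1−ε}`. -/
theorem stmt_4 (a b ε : ℝ) (ha : 0 < a) (hab : a ≤ b) (hε0 : 0 ≤ ε) (hε1 : ε < 1)
    (R : ℝ → ℝ)
    (hR : ∀ r : ℝ, 0 ≤ r →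
      R r = sSup ((fun z : ℝ => z ^ ε * Real.exp (-r * z)) '' Set.Icc a b)) :
    ∀ t : ℝ, 0 ≤ t →
      (∫ r in (0 : ℝ)..t, R r)
        ≤ (1 - Real.exp (-ε)) / b ^ (1 - ε)
          + (ε * Real.exp (-ε) / (1 - ε)) * (a ^ (ε - 1) - b ^ (ε - 1))
          + Real.exp (-ε) / a ^ (1 - ε) := by
  intro t ht
  have hεa : 0 ≤ ε / a := div_nonneg hε0 ha.le
  have hεb : 0 ≤ ε / b := div_nonneg hε0 (ha.trans_le hab).le
  set T := max t (ε / a)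
  have hint : ∀ {s u : ℝ}, 0 ≤ s → 0 ≤ u → IntervalIntegrable R volume s u :=
    intervalIntegrable_envelope hR ha hab hε0
  have hextend : ∫ r in (0 : ℝ)..t, R r ≤ ∫ r in (0 : ℝ)..T, R r :=
    integral_mono_interval le_rfl ht (le_max_left t _)
      ((ae_restrict_mem measurableSet_Ioc).mono fun r hr =>
        envelope_nonneg hR ha hab hε0 hr.1.le)
      (hint le_rfl (ht.trans (le_max_left t _)))
  have hsplit : ∫ r in (0 : ℝ)..T, R r = (∫ r in (0 : ℝ)..ε / b, R r)
      + (∫ r in ε / b..ε / a, R r) + ∫ r in ε / a..T, R r := by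
    rw [integral_add_adjacent_intervals (hint le_rfl hεb) (hint hεb hεa),
      integral_add_adjacent_intervals (hint le_rfl hεa) (hint hεa (hεa.trans (le_max_right t _)))]
  linarith [integral_envelope_le_right hR ha hab hε0, integral_envelope_le_middle hR ha hab hε0 hε1,
    integral_envelope_le_left hR ha hab hε0 (le_max_right t (ε / a))]
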